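/- arXiv:1703.08642 — 2 statements merged into one kernel-verified Lean document; each statement's English description precedes it below -/
import Mathlib

section
/- For every e ∈ ℂ^L and every h ∈ ℂ^{Ks}, x ∈ ℂ^{Ns}: |Re⟨ℋ(h,x) − X_0, 𝒜*(e)⟩| ≤ √(2s)·(max_{1≤i≤s}‖𝒜_i*(e)‖)·‖ℋ(h,x) − X_0‖_F, where ⟨U,V⟩ = Tr(U*V) is the Frobenius inner product, ‖𝒜_i*(e)‖ is the matrix operator norm, and 𝒜*(e) is the block-diagonal matrix with blocks 𝒜_i*(e). -/
noncomputable section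
open Finset ComplexConjugate

namespace RGD

/-- Squared Euclidean norm of a complex vector. -/
def vnormSq {n : ℕ} (v : Fin n → ℂ) : ℝ := ∑ j, ‖v j‖ ^ 2

/-- Euclidean norm of a complex vector. -/
def vnorm {n : ℕ} (v : Fin n → ℂ) : ℝ := Real.sqrt (vnormSq v)

/-- Inner product, conjugate-linear in the first argument. -/
def vinner {n : ℕ} (u v : Fin n → ℂ) : ℂ := ∑ j, conj (u j) * v j

/-- Squared Frobenius norm of a matrix. -/
def frobSq {K N : ℕ} (Z : Matrix (Fin K) (Fin N) ℂ) : ℝ := ∑ k, ∑ j, ‖Z k j‖ ^ 2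

/-- Frobenius norm of a matrix. -/
def frob {K N : ℕ} (Z : Matrix (Fin K) (Fin N) ℂ) : ℝ := Real.sqrt (frobSq Z)

/-- Frobenius inner product `⟨U,V⟩ = Tr(U*V)`, conjugate-linear in the first argument. -/
def finner {K N : ℕ} (U V : Matrix (Fin K) (Fin N) ℂ) : ℂ := ∑ k, ∑ j, conj (U k j) * V k j

/-- Spectral (operator) norm of a matrix: sup of `‖Zv‖` over the closed unit ball. -/
def opNorm {K N : ℕ} (Z : Matrix (Fin K) (Fin N) ℂ) : ℝ :=
  sSup {r : ℝ | ∃ v : Fin N → ℂ, vnorm v ≤ 1 ∧ r = vnorm (Z.mulVec v)}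

/-- Squared Frobenius norm of a block-diagonal matrix, given by its diagonal blocks. -/
def famFrobSq {K N s : ℕ} (Z : Fin s → Matrix (Fin K) (Fin N) ℂ) : ℝ := ∑ i, frobSq (Z i)

/-- Frobenius norm of a block-diagonal matrix, given by its diagonal blocks. -/
def famFrob {K N s : ℕ} (Z : Fin s → Matrix (Fin K) (Fin N) ℂ) : ℝ := Real.sqrt (famFrobSq Z)

/-- The rank-one matrix `u v*`. -/
def rankOne {K N : ℕ} (u : Fin K → ℂ) (v : Fin N → ℂ) : Matrix (Fin K) (Fin N) ℂ :=
  Matrix.of fun k j => u k * conj (v j)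

/-- `ℋ(h,x)`: block-diagonal matrix with `i`-th block `hᵢ xᵢ*`. -/
def Hmap {K N s : ℕ} (h : Fin s → Fin K → ℂ) (x : Fin s → Fin N → ℂ) :
    Fin s → Matrix (Fin K) (Fin N) ℂ := fun i => rankOne (h i) (x i)

/-- `𝒜ᵢ(Z) = (bₗ* Z aₗ)ₗ`. -/
def calAi {K N L : ℕ} (b : Fin L → Fin K → ℂ) (a : Fin L → Fin N → ℂ)
    (Z : Matrix (Fin K) (Fin N) ℂ) : Fin L → ℂ :=
  fun l => vinner (b l) (Z.mulVec (a l))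

/-- `𝒜(Z) = Σᵢ 𝒜ᵢ(Zᵢ)` on block-diagonal matrices. -/
def calA {K N L s : ℕ} (b : Fin L → Fin K → ℂ) (a : Fin s → Fin L → Fin N → ℂ)
    (Z : Fin s → Matrix (Fin K) (Fin N) ℂ) : Fin L → ℂ :=
  fun l => ∑ i, calAi b (a i) (Z i) l

/-- `𝒜ᵢ*(z) = Σₗ zₗ bₗ aₗ*`. -/
def calAdj {K N L : ℕ} (b : Fin L → Fin K → ℂ) (a : Fin L → Fin N → ℂ)
    (z : Fin L → ℂ) : Matrix (Fin K) (Fin N) ℂ :=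
  Matrix.of fun k j => ∑ l, z l * b l k * conj (a l j)

/-- `‖𝒜*(e)‖ = maxᵢ ‖𝒜ᵢ*(e)‖` (operator norms). -/
def AadjNorm {K N L s : ℕ} (b : Fin L → Fin K → ℂ) (a : Fin s → Fin L → Fin N → ℂ)
    (e : Fin L → ℂ) : ℝ :=
  ⨆ i : Fin s, opNorm (calAdj b (a i) e)

/-- `B*B = I_K`, expressed in terms of the columns `bₗ` of `B*`. -/
def BtBeqI {K L : ℕ} (b : Fin L → Fin K → ℂ) : Prop :=
  ∀ k k' : Fin K, (∑ l, b l k * conj (b l k')) = if k = k' then (1 : ℂ) else 0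

/-- `μ ≥ μ_h`, i.e. `√L ‖B h_{i0}‖_∞ ≤ μ ‖h_{i0}‖` for all `i`. -/
def muhLe {K L s : ℕ} (b : Fin L → Fin K → ℂ) (h0 : Fin s → Fin K → ℂ) (μ : ℝ) : Prop :=
  ∀ i l, Real.sqrt L * ‖vinner (b l) (h0 i)‖ ≤ μ * vnorm (h0 i)

/-- `d₀ = √(Σᵢ d_{i0}²)`. -/
def dtot {s : ℕ} (d0 : Fin s → ℝ) : ℝ := Real.sqrt (∑ i, d0 i ^ 2)

/-- Condition number `κ = (maxᵢ d_{i0}) / (minᵢ d_{i0})`. -/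
def kappa {s : ℕ} (d0 : Fin s → ℝ) : ℝ := (⨆ i, d0 i) / (⨅ i, d0 i)

/-- The observation `y = 𝒜(ℋ(h₀,x₀)) + e`. -/
def yvec {K N L s : ℕ} (b : Fin L → Fin K → ℂ) (a : Fin s → Fin L → Fin N → ℂ)
    (h0 : Fin s → Fin K → ℂ) (x0 : Fin s → Fin N → ℂ) (e : Fin L → ℂ) : Fin L → ℂ :=
  fun l => calA b a (Hmap h0 x0) l + e l

/-- `F(h,x) = ‖𝒜(ℋ(h,x)) − y‖²`. -/
def Fobj {K N L s : ℕ} (b : Fin L → Fin K → ℂ) (a : Fin s → Fin L → Fin N → ℂ)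
    (h0 : Fin s → Fin K → ℂ) (x0 : Fin s → Fin N → ℂ) (e : Fin L → ℂ)
    (h : Fin s → Fin K → ℂ) (x : Fin s → Fin N → ℂ) : ℝ :=
  vnormSq (fun l => calA b a (Hmap h x) l - yvec b a h0 x0 e l)

def G0 (z : ℝ) : ℝ := max (z - 1) 0 ^ 2

def G0' (z : ℝ) : ℝ := 2 * max (z - 1) 0

/-- The `i`-th regularizer `Gᵢ(hᵢ,xᵢ)` (including the factor `ρ`). -/
def Gi {K N L : ℕ} (b : Fin L → Fin K → ℂ) (ρ μ di : ℝ)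
    (hi : Fin K → ℂ) (xi : Fin N → ℂ) : ℝ :=
  ρ * (G0 (vnormSq hi / (2 * di)) + G0 (vnormSq xi / (2 * di))
    + ∑ l, G0 ((L : ℝ) * ‖vinner (b l) hi‖ ^ 2 / (8 * di * μ ^ 2)))

/-- The regularizer `G(h,x) = Σᵢ Gᵢ(hᵢ,xᵢ)`. -/
def Greg {K N L s : ℕ} (b : Fin L → Fin K → ℂ) (ρ μ : ℝ) (dd : Fin s → ℝ)
    (h : Fin s → Fin K → ℂ) (x : Fin s → Fin N → ℂ) : ℝ :=
  ∑ i, Gi b ρ μ (dd i) (h i) (x i)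

/-- `F̃ = F + G`. -/
def Ftil {K N L s : ℕ} (b : Fin L → Fin K → ℂ) (a : Fin s → Fin L → Fin N → ℂ)
    (h0 : Fin s → Fin K → ℂ) (x0 : Fin s → Fin N → ℂ) (e : Fin L → ℂ)
    (ρ μ : ℝ) (dd : Fin s → ℝ)
    (h : Fin s → Fin K → ℂ) (x : Fin s → Fin N → ℂ) : ℝ :=
  Fobj b a h0 x0 e h x + Greg b ρ μ dd h x

/-- The residual `𝒜(ℋ(h,x)) − y`. -/
def residual {K N L s : ℕ} (b : Fin L → Fin K → ℂ) (a : Fin s → Fin L → Fin N → ℂ)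
    (h0 : Fin s → Fin K → ℂ) (x0 : Fin s → Fin N → ℂ) (e : Fin L → ℂ)
    (h : Fin s → Fin K → ℂ) (x : Fin s → Fin N → ℂ) : Fin L → ℂ :=
  fun l => calA b a (Hmap h x) l - yvec b a h0 x0 e l

/-- Wirtinger gradient `∇F_{hᵢ} = 𝒜ᵢ*(𝒜(ℋ(h,x)) − y) xᵢ`. -/
def gradFh {K N L s : ℕ} (b : Fin L → Fin K → ℂ) (a : Fin s → Fin L → Fin N → ℂ)
    (h0 : Fin s → Fin K → ℂ) (x0 : Fin s → Fin N → ℂ) (e : Fin L → ℂ)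
    (h : Fin s → Fin K → ℂ) (x : Fin s → Fin N → ℂ) (i : Fin s) : Fin K → ℂ :=
  (calAdj b (a i) (residual b a h0 x0 e h x)).mulVec (x i)

/-- Wirtinger gradient `∇F_{xᵢ} = (𝒜ᵢ*(𝒜(ℋ(h,x)) − y))* hᵢ`. -/
def gradFx {K N L s : ℕ} (b : Fin L → Fin K → ℂ) (a : Fin s → Fin L → Fin N → ℂ)
    (h0 : Fin s → Fin K → ℂ) (x0 : Fin s → Fin N → ℂ) (e : Fin L → ℂ)
    (h : Fin s → Fin K → ℂ) (x : Fin s → Fin N → ℂ) (i : Fin s) : Fin N → ℂ :=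
  (calAdj b (a i) (residual b a h0 x0 e h x)).conjTranspose.mulVec (h i)

/-- Wirtinger gradient `∇G_{hᵢ}`. -/
def gradGh {K L s : ℕ} (b : Fin L → Fin K → ℂ) (ρ μ : ℝ) (dd : Fin s → ℝ)
    (h : Fin s → Fin K → ℂ) (i : Fin s) : Fin K → ℂ :=
  fun k => ((ρ / (2 * dd i) : ℝ) : ℂ) *
    (((G0' (vnormSq (h i) / (2 * dd i)) : ℝ) : ℂ) * h i k
      + (((L : ℝ) / (4 * μ ^ 2) : ℝ) : ℂ) *
        ∑ l, ((G0' ((L : ℝ) * ‖vinner (b l) (h i)‖ ^ 2 / (8 * dd i * μ ^ 2)) : ℝ) : ℂ)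
          * (vinner (b l) (h i) * b l k))

/-- Wirtinger gradient `∇G_{xᵢ}`. -/
def gradGx {N s : ℕ} (ρ : ℝ) (dd : Fin s → ℝ)
    (x : Fin s → Fin N → ℂ) (i : Fin s) : Fin N → ℂ :=
  fun j => ((ρ / (2 * dd i) : ℝ) : ℂ) * (((G0' (vnormSq (x i) / (2 * dd i)) : ℝ) : ℂ) * x i j)

/-- `∇F̃_{hᵢ} = ∇F_{hᵢ} + ∇G_{hᵢ}`. -/
def gradH {K N L s : ℕ} (b : Fin L → Fin K → ℂ) (a : Fin s → Fin L → Fin N → ℂ)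
    (h0 : Fin s → Fin K → ℂ) (x0 : Fin s → Fin N → ℂ) (e : Fin L → ℂ)
    (ρ μ : ℝ) (dd : Fin s → ℝ)
    (h : Fin s → Fin K → ℂ) (x : Fin s → Fin N → ℂ) (i : Fin s) : Fin K → ℂ :=
  fun k => gradFh b a h0 x0 e h x i k + gradGh b ρ μ dd h i k

/-- `∇F̃_{xᵢ} = ∇F_{xᵢ} + ∇G_{xᵢ}`. -/
def gradX {K N L s : ℕ} (b : Fin L → Fin K → ℂ) (a : Fin s → Fin L → Fin N → ℂ)
    (h0 : Fin s → Fin K → ℂ) (x0 : Fin s → Fin N → ℂ) (e : Fin L → ℂ)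
    (ρ μ : ℝ) (dd : Fin s → ℝ)
    (h : Fin s → Fin K → ℂ) (x : Fin s → Fin N → ℂ) (i : Fin s) : Fin N → ℂ :=
  fun j => gradFx b a h0 x0 e h x i j + gradGx ρ dd x i j

/-- `‖∇F̃(h,x)‖²` (squared norm of the stacked Wirtinger gradient). -/
def gradNormSq {K N L s : ℕ} (b : Fin L → Fin K → ℂ) (a : Fin s → Fin L → Fin N → ℂ)
    (h0 : Fin s → Fin K → ℂ) (x0 : Fin s → Fin N → ℂ) (e : Fin L → ℂ)
    (ρ μ : ℝ) (dd : Fin s → ℝ)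
    (h : Fin s → Fin K → ℂ) (x : Fin s → Fin N → ℂ) : ℝ :=
  ∑ i, vnormSq (gradH b a h0 x0 e ρ μ dd h x i) + ∑ i, vnormSq (gradX b a h0 x0 e ρ μ dd h x i)

/-- `‖∇F̃(h',x') − ∇F̃(h,x)‖²`. -/
def gradDiffNormSq {K N L s : ℕ} (b : Fin L → Fin K → ℂ) (a : Fin s → Fin L → Fin N → ℂ)
    (h0 : Fin s → Fin K → ℂ) (x0 : Fin s → Fin N → ℂ) (e : Fin L → ℂ)
    (ρ μ : ℝ) (dd : Fin s → ℝ)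
    (h : Fin s → Fin K → ℂ) (x : Fin s → Fin N → ℂ)
    (h' : Fin s → Fin K → ℂ) (x' : Fin s → Fin N → ℂ) : ℝ :=
  ∑ i, vnormSq (fun k => gradH b a h0 x0 e ρ μ dd h' x' i k - gradH b a h0 x0 e ρ μ dd h x i k)
  + ∑ i, vnormSq (fun j => gradX b a h0 x0 e ρ μ dd h' x' i j - gradX b a h0 x0 e ρ μ dd h x i j)

/-- Membership in `𝒩_d`. -/
def inNd {K N s : ℕ} (d0 : Fin s → ℝ)
    (h : Fin s → Fin K → ℂ) (x : Fin s → Fin N → ℂ) : Prop :=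
  ∀ i, vnorm (h i) ≤ 2 * Real.sqrt (d0 i) ∧ vnorm (x i) ≤ 2 * Real.sqrt (d0 i)

/-- Membership in `𝒩_μ`. -/
def inNmu {K L s : ℕ} (b : Fin L → Fin K → ℂ) (d0 : Fin s → ℝ) (μ : ℝ)
    (h : Fin s → Fin K → ℂ) : Prop :=
  ∀ i, ∀ l, Real.sqrt L * ‖vinner (b l) (h i)‖ ≤ 4 * Real.sqrt (d0 i) * μ

/-- `δᵢ(hᵢ,xᵢ) = ‖hᵢxᵢ* − h_{i0}x_{i0}*‖_F / d_{i0}`. -/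
def deltaI {K N : ℕ} (h0i : Fin K → ℂ) (x0i : Fin N → ℂ) (d0i : ℝ)
    (hi : Fin K → ℂ) (xi : Fin N → ℂ) : ℝ :=
  frob (rankOne hi xi - rankOne h0i x0i) / d0i

/-- Membership in `𝒩_ε`. -/
def inNeps {K N s : ℕ} (h0 : Fin s → Fin K → ℂ) (x0 : Fin s → Fin N → ℂ)
    (d0 : Fin s → ℝ) (ε : ℝ)
    (h : Fin s → Fin K → ℂ) (x : Fin s → Fin N → ℂ) : Prop :=
  ∀ i, deltaI (h0 i) (x0 i) (d0 i) (h i) (x i) ≤ ε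

/-- The global relative error `δ(h,x) = ‖ℋ(h,x) − X₀‖_F / d₀`. -/
def deltaTot {K N s : ℕ} (h0 : Fin s → Fin K → ℂ) (x0 : Fin s → Fin N → ℂ)
    (d0 : Fin s → ℝ)
    (h : Fin s → Fin K → ℂ) (x : Fin s → Fin N → ℂ) : ℝ :=
  famFrob (fun i => Hmap h x i - Hmap h0 x0 i) / dtot d0

/-- Membership in `𝒩_F̃`. -/
def inNF {K N L s : ℕ} (b : Fin L → Fin K → ℂ) (a : Fin s → Fin L → Fin N → ℂ)
    (h0 : Fin s → Fin K → ℂ) (x0 : Fin s → Fin N → ℂ) (e : Fin L → ℂ)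
    (d0 : Fin s → ℝ) (ρ μ : ℝ) (dd : Fin s → ℝ) (ε : ℝ)
    (h : Fin s → Fin K → ℂ) (x : Fin s → Fin N → ℂ) : Prop :=
  Ftil b a h0 x0 e ρ μ dd h x ≤ ε ^ 2 * dtot d0 ^ 2 / (3 * (s : ℝ) * kappa d0 ^ 2) + vnormSq e

/-- The Local Restricted Isometry Property on `𝒩_d ∩ 𝒩_μ ∩ 𝒩_ε`. -/
def LocalRIP {K N L s : ℕ} (b : Fin L → Fin K → ℂ) (a : Fin s → Fin L → Fin N → ℂ)
    (h0 : Fin s → Fin K → ℂ) (x0 : Fin s → Fin N → ℂ)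
    (d0 : Fin s → ℝ) (μ ε : ℝ) : Prop :=
  ∀ (h : Fin s → Fin K → ℂ) (x : Fin s → Fin N → ℂ),
    inNd d0 h x → inNmu b d0 μ h → inNeps h0 x0 d0 ε h x →
      (2 / 3) * famFrobSq (fun i => Hmap h x i - Hmap h0 x0 i)
          ≤ vnormSq (calA b a fun i => Hmap h x i - Hmap h0 x0 i)
      ∧ vnormSq (calA b a fun i => Hmap h x i - Hmap h0 x0 i)
          ≤ (3 / 2) * famFrobSq (fun i => Hmap h x i - Hmap h0 x0 i)

/-- `α_{i1} = ⟨h_{i0}, hᵢ⟩ / d_{i0}`. -/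
def alpha1 {K s : ℕ} (h0 : Fin s → Fin K → ℂ) (d0 : Fin s → ℝ)
    (h : Fin s → Fin K → ℂ) (i : Fin s) : ℂ :=
  vinner (h0 i) (h i) / ((d0 i : ℝ) : ℂ)

/-- `α_{i2} = ⟨x_{i0}, xᵢ⟩ / d_{i0}`. -/
def alpha2 {N s : ℕ} (x0 : Fin s → Fin N → ℂ) (d0 : Fin s → ℝ)
    (x : Fin s → Fin N → ℂ) (i : Fin s) : ℂ :=
  vinner (x0 i) (x i) / ((d0 i : ℝ) : ℂ)

/-- `δ₀ = δ/10`. -/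
def delta0 {K N s : ℕ} (h0 : Fin s → Fin K → ℂ) (x0 : Fin s → Fin N → ℂ)
    (d0 : Fin s → ℝ) (h : Fin s → Fin K → ℂ) (x : Fin s → Fin N → ℂ) : ℝ :=
  deltaTot h0 x0 d0 h x / 10

/-- `αᵢ = (1−δ₀)α_{i1}` if `‖hᵢ‖ ≥ ‖xᵢ‖`, else `1/((1−δ₀) conj(α_{i2}))`. -/
def alphaC {K N s : ℕ} (h0 : Fin s → Fin K → ℂ) (x0 : Fin s → Fin N → ℂ)
    (d0 : Fin s → ℝ) (h : Fin s → Fin K → ℂ) (x : Fin s → Fin N → ℂ) (i : Fin s) : ℂ :=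
  if vnorm (x i) ≤ vnorm (h i)
  then ((1 - delta0 h0 x0 d0 h x : ℝ) : ℂ) * alpha1 h0 d0 h i
  else 1 / (((1 - delta0 h0 x0 d0 h x : ℝ) : ℂ) * conj (alpha2 x0 d0 x i))

/-- `Δhᵢ = hᵢ − αᵢ h_{i0}`. -/
def dh {K N s : ℕ} (h0 : Fin s → Fin K → ℂ) (x0 : Fin s → Fin N → ℂ)
    (d0 : Fin s → ℝ) (h : Fin s → Fin K → ℂ) (x : Fin s → Fin N → ℂ) (i : Fin s) :
    Fin K → ℂ :=
  fun k => h i k - alphaC h0 x0 d0 h x i * h0 i k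

/-- `Δxᵢ = xᵢ − conj(αᵢ)⁻¹ x_{i0}`. -/
def dx {K N s : ℕ} (h0 : Fin s → Fin K → ℂ) (x0 : Fin s → Fin N → ℂ)
    (d0 : Fin s → ℝ) (h : Fin s → Fin K → ℂ) (x : Fin s → Fin N → ℂ) (i : Fin s) :
    Fin N → ℂ :=
  fun j => x i j - (conj (alphaC h0 x0 d0 h x i))⁻¹ * x0 i j

/-- `σ²_max(h,x) = maxₗ Σᵢ |bₗ*hᵢ|² ‖xᵢ‖²`. -/
def sigmaMaxSq {K N L s : ℕ} (b : Fin L → Fin K → ℂ)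
    (h : Fin s → Fin K → ℂ) (x : Fin s → Fin N → ℂ) : ℝ :=
  ⨆ l : Fin L, ∑ i, ‖vinner (b l) (h i)‖ ^ 2 * vnormSq (x i)

/-- The rank-one bound (Lemma: `𝒜` on block-diagonal matrices with rank-1 blocks). -/
def RankOneBound {K N L s : ℕ} (b : Fin L → Fin K → ℂ)
    (a : Fin s → Fin L → Fin N → ℂ) : Prop :=
  ∀ (h : Fin s → Fin K → ℂ) (x : Fin s → Fin N → ℂ),
    vnormSq (calA b a (Hmap h x)) ≤
      4 / 3 * famFrobSq (Hmap h x)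
      + 2 * Real.sqrt (2 * (s : ℝ) * famFrobSq (Hmap h x) * sigmaMaxSq b h x
          * ((K : ℝ) + N) * Real.log L)
      + 8 * (s : ℝ) * sigmaMaxSq b h x * ((K : ℝ) + N) * Real.log L

/-- The subspace `Tᵢ = {h_{i0} v* + u x_{i0}*}`. -/
def Tspace {K N : ℕ} (h0i : Fin K → ℂ) (x0i : Fin N → ℂ) :
    Set (Matrix (Fin K) (Fin N) ℂ) :=
  {Z | ∃ (u : Fin K → ℂ) (v : Fin N → ℂ), Z = rankOne h0i v + rankOne u x0i}

/-- `P` is the orthogonal projection onto `Tᵢ` w.r.t. the Frobenius inner product. -/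
def IsFrobProj {K N : ℕ} (h0i : Fin K → ℂ) (x0i : Fin N → ℂ)
    (P : Matrix (Fin K) (Fin N) ℂ → Matrix (Fin K) (Fin N) ℂ) : Prop :=
  ∀ Z, P Z ∈ Tspace h0i x0i ∧ ∀ W ∈ Tspace h0i x0i, finner W (Z - P Z) = 0

/-- Operator norm of `𝒜ᵢ` from `(ℂ^{K×N}, ‖·‖_F)` to `(ℂ^L, ‖·‖)`. -/
def calAiOpNorm {K N L : ℕ} (b : Fin L → Fin K → ℂ) (a : Fin L → Fin N → ℂ) : ℝ :=
  sSup {r : ℝ | ∃ Z : Matrix (Fin K) (Fin N) ℂ, frob Z ≤ 1 ∧ r = vnorm (calAi b a Z)}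

/-- Operator norm of `𝒜` from block-diagonal matrices with `‖·‖_F` to `ℂ^L`. -/
def calAOpNorm {K N L s : ℕ} (b : Fin L → Fin K → ℂ)
    (a : Fin s → Fin L → Fin N → ℂ) : ℝ :=
  sSup {r : ℝ | ∃ Z : Fin s → Matrix (Fin K) (Fin N) ℂ, famFrob Z ≤ 1 ∧ r = vnorm (calA b a Z)}

/-- Norm of a stacked vector in `ℂ^{ns}`. -/
def stackNorm {n s : ℕ} (u : Fin s → Fin n → ℂ) : ℝ := Real.sqrt (∑ i, vnormSq (u i))

/-- Norm of a point `z = (h,x) ∈ ℂ^{s(K+N)}`. -/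
def pairNorm {K N s : ℕ} (u : Fin s → Fin K → ℂ) (v : Fin s → Fin N → ℂ) : ℝ :=
  Real.sqrt (∑ i, vnormSq (u i) + ∑ i, vnormSq (v i))

/-- `z + t • w` componentwise, `t` real. -/
def shiftV {n s : ℕ} (u w : Fin s → Fin n → ℂ) (t : ℝ) : Fin s → Fin n → ℂ :=
  fun i k => u i k + (t : ℂ) * w i k

/-- `σ_max(h) = maxₗ √(Σᵢ |bₗ*hᵢ|²)` (unit `xᵢ`'s). -/
def sigmaMaxU {K L s : ℕ} (b : Fin L → Fin K → ℂ) (h : Fin s → Fin K → ℂ) : ℝ :=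
  ⨆ l, Real.sqrt (∑ i, ‖vinner (b l) (h i)‖ ^ 2)

/-!
Splitting `hᵢ` along `h_{i0}` writes each block as `hᵢxᵢ* − h_{i0}x_{i0}* = h_{i0}w* + pxᵢ*` with
`p ⊥ h_{i0}`. Its pairing with `M = 𝒜ᵢ*(e)` is `⟨h_{i0}, Mw⟩ + ⟨p, Mxᵢ⟩`, of modulus at most
`‖M‖ (‖h_{i0}‖‖w‖ + ‖p‖‖xᵢ‖)`, and by orthogonality the squared Frobenius norm of the block is
`‖h_{i0}‖²‖w‖² + ‖p‖²‖xᵢ‖²`; so each block contributes at most `√2 ‖M‖` times its Frobenius norm.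
Cauchy–Schwarz over the `s` blocks supplies the remaining factor `√s`.
-/

open scoped Matrix

lemma vnormSq_nonneg {n : ℕ} (v : Fin n → ℂ) : 0 ≤ vnormSq v :=
  sum_nonneg fun _ _ => by positivity

lemma vnorm_sq {n : ℕ} (v : Fin n → ℂ) : vnorm v ^ 2 = vnormSq v :=
  Real.sq_sqrt (vnormSq_nonneg v)

lemma vnorm_eq_norm_toLp {n : ℕ} (v : Fin n → ℂ) : vnorm v = ‖WithLp.toLp 2 v‖ := by
  rw [EuclideanSpace.norm_eq]; rfl

lemma vinner_eq_inner_toLp {n : ℕ} (u v : Fin n → ℂ) :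
    vinner u v = inner ℂ (WithLp.toLp 2 u) (WithLp.toLp 2 v) := by
  simp [vinner, PiLp.inner_apply, mul_comm]

lemma norm_vinner_le {n : ℕ} (u v : Fin n → ℂ) : ‖vinner u v‖ ≤ vnorm u * vnorm v := by
  rw [vinner_eq_inner_toLp, vnorm_eq_norm_toLp, vnorm_eq_norm_toLp]
  exact norm_inner_le_norm _ _

lemma conj_vinner {n : ℕ} (u v : Fin n → ℂ) : conj (vinner u v) = vinner v u := by
  simp only [vinner_eq_inner_toLp, inner_conj_symm]

lemma vinner_self {n : ℕ} (v : Fin n → ℂ) : vinner v v = (vnormSq v : ℂ) := by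
  simp only [vinner, vnormSq, Complex.conj_mul', Complex.ofReal_sum, Complex.ofReal_pow]

lemma vinner_sub_smul_right {n : ℕ} (u v w : Fin n → ℂ) (c : ℂ) :
    vinner u (v - c • w) = vinner u v - c * vinner u w := by
  simp only [vinner_eq_inner_toLp, WithLp.toLp_sub, WithLp.toLp_smul, inner_sub_right,
    inner_smul_right]

lemma opNorm_eq_norm_toEuclideanLin {K N : ℕ} (M : Matrix (Fin K) (Fin N) ℂ) :
    opNorm M = ‖LinearMap.toContinuousLinearMap (Matrix.toEuclideanLin M)‖ := by
  rw [← ContinuousLinearMap.sSup_unitClosedBall_eq_norm, opNorm]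
  congr 1
  ext r
  simp only [Set.mem_ofPred_eq, Set.mem_image, Metric.mem_closedBall, dist_zero_right,
    LinearMap.coe_toContinuousLinearMap', Matrix.toLpLin_apply]
  constructor
  · rintro ⟨v, hv, rfl⟩
    exact ⟨WithLp.toLp 2 v, by rwa [← vnorm_eq_norm_toLp], by rw [vnorm_eq_norm_toLp]⟩
  · rintro ⟨v, hv, rfl⟩
    exact ⟨WithLp.ofLp v, by rwa [vnorm_eq_norm_toLp], by rw [vnorm_eq_norm_toLp]⟩

lemma opNorm_nonneg {K N : ℕ} (M : Matrix (Fin K) (Fin N) ℂ) : 0 ≤ opNorm M := by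
  rw [opNorm_eq_norm_toEuclideanLin]; exact norm_nonneg _

lemma vnorm_mulVec_le {K N : ℕ} (M : Matrix (Fin K) (Fin N) ℂ) (v : Fin N → ℂ) :
    vnorm (M *ᵥ v) ≤ opNorm M * vnorm v := by
  rw [opNorm_eq_norm_toEuclideanLin, vnorm_eq_norm_toLp, vnorm_eq_norm_toLp]
  exact (LinearMap.toContinuousLinearMap (Matrix.toEuclideanLin M)).le_opNorm (WithLp.toLp 2 v)

lemma frob_nonneg {K N : ℕ} (Z : Matrix (Fin K) (Fin N) ℂ) : 0 ≤ frob Z := Real.sqrt_nonneg _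

lemma frob_sq {K N : ℕ} (Z : Matrix (Fin K) (Fin N) ℂ) : frob Z ^ 2 = frobSq Z :=
  Real.sq_sqrt (sum_nonneg fun _ _ => sum_nonneg fun _ _ => by positivity)

lemma finner_self_re {K N : ℕ} (Z : Matrix (Fin K) (Fin N) ℂ) : (finner Z Z).re = frobSq Z := by
  simp only [finner, frobSq, Complex.conj_mul', Complex.re_sum]
  norm_cast

lemma finner_add_left {K N : ℕ} (A B M : Matrix (Fin K) (Fin N) ℂ) :
    finner (A + B) M = finner A M + finner B M := by
  simp only [finner, Matrix.add_apply, map_add, add_mul, sum_add_distrib]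

lemma finner_add_right {K N : ℕ} (M A B : Matrix (Fin K) (Fin N) ℂ) :
    finner M (A + B) = finner M A + finner M B := by
  simp only [finner, Matrix.add_apply, mul_add, sum_add_distrib]

lemma finner_rankOne_left {K N : ℕ} (u : Fin K → ℂ) (v : Fin N → ℂ)
    (M : Matrix (Fin K) (Fin N) ℂ) : finner (rankOne u v) M = vinner u (M *ᵥ v) := by
  simp only [finner, rankOne, vinner, Matrix.mulVec, dotProduct, Matrix.of_apply, mul_sum,
    map_mul, Complex.conj_conj]
  exact sum_congr rfl fun _ _ => sum_congr rfl fun _ _ => by ring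

lemma finner_rankOne_rankOne {K N : ℕ} (u u' : Fin K → ℂ) (v v' : Fin N → ℂ) :
    finner (rankOne u v) (rankOne u' v') = vinner u u' * vinner v' v := by
  simp only [finner, rankOne, vinner, Matrix.of_apply, sum_mul_sum, map_mul, Complex.conj_conj]
  exact sum_congr rfl fun _ _ => sum_congr rfl fun _ _ => by ring

lemma frobSq_rankOne_add_rankOne {K N : ℕ} {u p : Fin K → ℂ} (hup : vinner u p = 0)
    (w v : Fin N → ℂ) :
    frobSq (rankOne u w + rankOne p v) = vnormSq u * vnormSq w + vnormSq p * vnormSq v := by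
  have hpu : vinner p u = 0 := by rw [← conj_vinner, hup, map_zero]
  rw [← finner_self_re, finner_add_left, finner_add_right, finner_add_right,
    finner_rankOne_rankOne, finner_rankOne_rankOne, finner_rankOne_rankOne,
    finner_rankOne_rankOne, hup, hpu, vinner_self, vinner_self, vinner_self, vinner_self]
  simp

lemma add_le_sqrt_two_mul_sqrt (x y : ℝ) : x + y ≤ √2 * √(x ^ 2 + y ^ 2) := by
  rw [← Real.sqrt_mul zero_le_two]
  exact Real.le_sqrt_of_sq_le (by nlinarith [sq_nonneg (x - y)])

lemma exists_rankOne_sub_rankOne_eq {K N : ℕ} (u u₀ : Fin K → ℂ) (v v₀ : Fin N → ℂ) :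
    ∃ (p : Fin K → ℂ) (w : Fin N → ℂ),
      vinner u₀ p = 0 ∧ rankOne u v - rankOne u₀ v₀ = rankOne u₀ w + rankOne p v := by
  set c : ℂ := vinner u₀ u / (vnormSq u₀ : ℂ)
  refine ⟨u - c • u₀, conj c • v - v₀, ?_, ?_⟩
  · rw [vinner_sub_smul_right, vinner_self]
    rcases eq_or_ne (vnormSq u₀) 0 with h | h
    · have hu : vinner u₀ u = 0 := by
        simpa [vnorm, h] using norm_vinner_le u₀ u
      simp [c, h, hu]
    · simp [c, div_mul_cancel₀ _ (Complex.ofReal_ne_zero.mpr h)]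
  · ext k j
    simp only [rankOne, Matrix.sub_apply, Matrix.add_apply, Matrix.of_apply, Pi.sub_apply,
      Pi.smul_apply, smul_eq_mul, map_sub, map_mul, Complex.conj_conj]
    ring

lemma norm_finner_rankOne_add_rankOne_le {K N : ℕ} {u p : Fin K → ℂ} (hup : vinner u p = 0)
    (w v : Fin N → ℂ) (M : Matrix (Fin K) (Fin N) ℂ) :
    ‖finner (rankOne u w + rankOne p v) M‖
      ≤ √2 * opNorm M * frob (rankOne u w + rankOne p v) := by
  have hfrob : frob (rankOne u w + rankOne p v)
      = √((vnorm u * vnorm w) ^ 2 + (vnorm p * vnorm v) ^ 2) := by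
    rw [frob, frobSq_rankOne_add_rankOne hup, mul_pow, mul_pow, vnorm_sq, vnorm_sq, vnorm_sq,
      vnorm_sq]
  calc ‖finner (rankOne u w + rankOne p v) M‖
      = ‖vinner u (M *ᵥ w) + vinner p (M *ᵥ v)‖ := by
        rw [finner_add_left, finner_rankOne_left, finner_rankOne_left]
    _ ≤ vnorm u * (opNorm M * vnorm w) + vnorm p * (opNorm M * vnorm v) := by
        refine (norm_add_le _ _).trans (add_le_add ?_ ?_) <;>
          exact (norm_vinner_le _ _).trans
            (mul_le_mul_of_nonneg_left (vnorm_mulVec_le _ _) (Real.sqrt_nonneg _))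
    _ = opNorm M * (vnorm u * vnorm w + vnorm p * vnorm v) := by ring
    _ ≤ opNorm M * (√2 * frob (rankOne u w + rankOne p v)) := by
        rw [hfrob]
        exact mul_le_mul_of_nonneg_left (add_le_sqrt_two_mul_sqrt _ _) (opNorm_nonneg M)
    _ = √2 * opNorm M * frob (rankOne u w + rankOne p v) := by ring

lemma norm_finner_rankOne_sub_rankOne_le {K N : ℕ} (u u₀ : Fin K → ℂ) (v v₀ : Fin N → ℂ)
    (M : Matrix (Fin K) (Fin N) ℂ) :
    ‖finner (rankOne u v - rankOne u₀ v₀) M‖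
      ≤ √2 * opNorm M * frob (rankOne u v - rankOne u₀ v₀) := by
  obtain ⟨p, w, hp, hdecomp⟩ := exists_rankOne_sub_rankOne_eq u u₀ v v₀
  rw [hdecomp]
  exact norm_finner_rankOne_add_rankOne_le hp w v M

lemma sum_frob_le_sqrt_card_mul_famFrob {K N s : ℕ} (Z : Fin s → Matrix (Fin K) (Fin N) ℂ) :
    ∑ i, frob (Z i) ≤ √s * famFrob Z := by
  simpa [famFrob, famFrobSq, frob_sq] using
    Real.sum_mul_le_sqrt_mul_sqrt univ (fun _ => (1 : ℝ)) (fun i => frob (Z i))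

lemma AadjNorm_nonneg {K N L s : ℕ} (b : Fin L → Fin K → ℂ) (a : Fin s → Fin L → Fin N → ℂ)
    (e : Fin L → ℂ) : 0 ≤ AadjNorm b a e :=
  Real.iSup_nonneg fun _ => opNorm_nonneg _

lemma opNorm_le_AadjNorm {K N L s : ℕ} (b : Fin L → Fin K → ℂ)
    (a : Fin s → Fin L → Fin N → ℂ) (e : Fin L → ℂ) (i : Fin s) :
    opNorm (calAdj b (a i) e) ≤ AadjNorm b a e :=
  le_ciSup (f := fun i => opNorm (calAdj b (a i) e)) (Finite.bddAbove_range _) i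

theorem statement7_general
    {K N L s : ℕ}
    (b : Fin L → Fin K → ℂ)
    (a : Fin s → Fin L → Fin N → ℂ)
    (h0 : Fin s → Fin K → ℂ) (x0 : Fin s → Fin N → ℂ) :
    ∀ (e : Fin L → ℂ) (h : Fin s → Fin K → ℂ) (x : Fin s → Fin N → ℂ),
      |(∑ i, finner (Hmap h x i - Hmap h0 x0 i) (calAdj b (a i) e)).re|
        ≤ Real.sqrt (2 * (s : ℝ)) * AadjNorm b a e
            * famFrob (fun i => Hmap h x i - Hmap h0 x0 i) := by
  intro e h x
  set Z := fun i => Hmap h x i - Hmap h0 x0 i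
  have hblock : ∀ i, ‖finner (Z i) (calAdj b (a i) e)‖ ≤ √2 * AadjNorm b a e * frob (Z i) :=
    fun i => (norm_finner_rankOne_sub_rankOne_le _ _ _ _ _).trans <|
      mul_le_mul_of_nonneg_right
        (mul_le_mul_of_nonneg_left (opNorm_le_AadjNorm b a e i) (Real.sqrt_nonneg 2))
        (frob_nonneg _)
  have hA : 0 ≤ √2 * AadjNorm b a e := mul_nonneg (Real.sqrt_nonneg 2) (AadjNorm_nonneg b a e)
  calc |(∑ i, finner (Z i) (calAdj b (a i) e)).re|
      ≤ ∑ i, ‖finner (Z i) (calAdj b (a i) e)‖ :=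
        (Complex.abs_re_le_norm _).trans (norm_sum_le _ _)
    _ ≤ ∑ i, √2 * AadjNorm b a e * frob (Z i) := sum_le_sum fun i _ => hblock i
    _ = √2 * AadjNorm b a e * ∑ i, frob (Z i) := (mul_sum _ _ _).symm
    _ ≤ √2 * AadjNorm b a e * (√s * famFrob Z) :=
        mul_le_mul_of_nonneg_left (sum_frob_le_sqrt_card_mul_famFrob Z) hA
    _ = √(2 * s) * AadjNorm b a e * famFrob Z := by
        rw [Real.sqrt_mul zero_le_two]; ring

/-- cross-term bound. -/
theorem statement7
    {K N L s : ℕ} (hK : 0 < K) (hN : 0 < N) (hL : 0 < L) (hs : 0 < s)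
    (b : Fin L → Fin K → ℂ)
    (a : Fin s → Fin L → Fin N → ℂ)
    (h0 : Fin s → Fin K → ℂ) (x0 : Fin s → Fin N → ℂ) :
    ∀ (e : Fin L → ℂ) (h : Fin s → Fin K → ℂ) (x : Fin s → Fin N → ℂ),
      |(∑ i, finner (Hmap h x i - Hmap h0 x0 i) (calAdj b (a i) e)).re|
        ≤ Real.sqrt (2 * (s : ℝ)) * AadjNorm b a e
            * famFrob (fun i => Hmap h x i - Hmap h0 x0 i) :=
  statement7_general b a h0 x0

end RGD
end
end

section
/- Let b_1,…,b_L ∈ ℂ^K with ‖b_l‖² = K/L ≤ 1 for every l and Σ_{l=1}^L b_l b_l* = I_K. Let x_1,…,x_s ∈ ℂ^N with ‖x_i‖ = 1 for all i, and for h = (h_1,…,h_s) ∈ ℂ^{Ks} define σ_max(h,x) = max_{1≤l≤L} √(Σ_{i=1}^s |b_l*h_i|²). Then: (i) for any h, u ∈ ℂ^{Ks}, |σ_max(h,x) − σ_max(u,x)| ≤ ‖h − u‖; (ii) if moreover ‖h‖ = ‖u‖ = 1, then |σ_max²(h,x) − σ_max²(u,x)| ≤ 2‖h − u‖; and (iii)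 if ‖h‖ = 1 then 1/L ≤ σ_max²(h,x) ≤ K/L. -/
noncomputable section
open Finset ComplexConjugate

namespace RGD

/-! For fixed `l` the vector `(bₗ* hᵢ)ᵢ` is linear in `h`, and `B*B = I` gives Parseval's identity
`Σₗ Σᵢ |bₗ* hᵢ|² = ‖h‖²`. Hence each `h ↦ ‖(bₗ* hᵢ)ᵢ‖` is a seminorm bounded by `‖h‖`, so it is
1-Lipschitz, and so is their maximum `σ_max`; (ii) follows from `σ_max ≤ ‖h‖ = 1` and
`a² − b² = (a − b)(a + b)`. For (iii), the largest of `L` row energies summing to `‖h‖² = 1` is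
at least `1/L`, while Cauchy–Schwarz with `‖bₗ‖² = K/L` bounds each of them by `K/L`. -/

open scoped Matrix

lemma ofReal_vnormSq {n : ℕ} (v : Fin n → ℂ) : (vnormSq v : ℂ) = star v ⬝ᵥ v := by
  simp [vnormSq, dotProduct, Complex.conj_mul']

lemma norm_vinner_sq_le {n : ℕ} (u v : Fin n → ℂ) :
    ‖vinner u v‖ ^ 2 ≤ vnormSq u * vnormSq v := by
  have htri : ‖vinner u v‖ ≤ ∑ j, ‖u j‖ * ‖v j‖ :=
    (norm_sum_le _ _).trans_eq (by simp)
  calc ‖vinner u v‖ ^ 2 ≤ (∑ j, ‖u j‖ * ‖v j‖) ^ 2 := by gcongr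
    _ ≤ vnormSq u * vnormSq v := sum_mul_sq_le_sq_mul_sq _ _ _

lemma stackNorm_sq {n s : ℕ} (h : Fin s → Fin n → ℂ) :
    stackNorm h ^ 2 = ∑ i, vnormSq (h i) :=
  Real.sq_sqrt (sum_nonneg fun i _ => vnormSq_nonneg (h i))

lemma stackNorm_sub_comm {n s : ℕ} (h u : Fin s → Fin n → ℂ) :
    stackNorm (fun i => h i - u i) = stackNorm (fun i => u i - h i) := by
  simp only [stackNorm, vnormSq, Pi.sub_apply, norm_sub_rev]

section Rows

variable {K L s : ℕ} (b : Fin L → Fin K → ℂ)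

/-- The matrix `B` whose `l`-th row is `bₗ*`. -/
def matB : Matrix (Fin L) (Fin K) ℂ := Matrix.of fun l k => conj (b l k)

lemma matB_mulVec (v : Fin K → ℂ) : matB b *ᵥ v = fun l => vinner (b l) v := rfl

lemma conjTranspose_matB_mul_self (hb : BtBeqI b) : (matB b)ᴴ * matB b = 1 := by
  ext k k'
  simpa [matB, Matrix.mul_apply, Matrix.one_apply] using hb k k'

lemma sum_norm_vinner_sq (hb : BtBeqI b) (v : Fin K → ℂ) :
    ∑ l, ‖vinner (b l) v‖ ^ 2 = vnormSq v := by
  apply Complex.ofReal_injective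
  calc ((∑ l, ‖vinner (b l) v‖ ^ 2 : ℝ) : ℂ) = star (matB b *ᵥ v) ⬝ᵥ (matB b *ᵥ v) := by
        rw [← ofReal_vnormSq, matB_mulVec, vnormSq]
    _ = star v ⬝ᵥ ((matB b)ᴴ * matB b) *ᵥ v := by
        rw [Matrix.star_mulVec, ← Matrix.dotProduct_mulVec, Matrix.mulVec_mulVec]
    _ = (vnormSq v : ℂ) := by
        rw [conjTranspose_matB_mul_self b hb, Matrix.one_mulVec, ofReal_vnormSq]

def rowEnergy (h : Fin s → Fin K → ℂ) (l : Fin L) : ℝ := ∑ i, ‖vinner (b l) (h i)‖ ^ 2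

lemma rowEnergy_nonneg (h : Fin s → Fin K → ℂ) (l : Fin L) : 0 ≤ rowEnergy b h l :=
  sum_nonneg fun _ _ => sq_nonneg _

lemma sum_rowEnergy (hb : BtBeqI b) (h : Fin s → Fin K → ℂ) :
    ∑ l, rowEnergy b h l = stackNorm h ^ 2 := by
  rw [stackNorm_sq]
  unfold rowEnergy
  rw [sum_comm]
  exact sum_congr rfl fun i _ => sum_norm_vinner_sq b hb (h i)

lemma sqrt_rowEnergy_le_stackNorm (hb : BtBeqI b) (h : Fin s → Fin K → ℂ) (l : Fin L) :
    √(rowEnergy b h l) ≤ stackNorm h := by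
  have hrow : rowEnergy b h l ≤ stackNorm h ^ 2 :=
    sum_rowEnergy b hb h ▸ single_le_sum (fun l _ => rowEnergy_nonneg b h l) (mem_univ l)
  exact (Real.sqrt_le_sqrt hrow).trans_eq (Real.sqrt_sq (Real.sqrt_nonneg _))

lemma rowEnergy_le_mul_stackNorm_sq {c : ℝ} (hbl : ∀ l, vnormSq (b l) = c)
    (h : Fin s → Fin K → ℂ) (l : Fin L) : rowEnergy b h l ≤ c * stackNorm h ^ 2 := by
  rw [stackNorm_sq, mul_sum]
  unfold rowEnergy
  exact sum_le_sum fun i _ => hbl l ▸ norm_vinner_sq_le (b l) (h i)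

lemma sqrt_rowEnergy_eq_norm (h : Fin s → Fin K → ℂ) (l : Fin L) :
    √(rowEnergy b h l)
      = ‖(WithLp.toLp 2 fun i => vinner (b l) (h i) : EuclideanSpace ℂ (Fin s))‖ := by
  rw [EuclideanSpace.norm_eq]
  rfl

lemma sqrt_rowEnergy_le_add (h u : Fin s → Fin K → ℂ) (l : Fin L) :
    √(rowEnergy b h l) ≤ √(rowEnergy b u l) + √(rowEnergy b (fun i => h i - u i) l) := by
  have hsub : (fun i => vinner (b l) (h i - u i))
      = (fun i => vinner (b l) (h i)) - fun i => vinner (b l) (u i) := by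
    ext i
    simp [vinner, mul_sub]
  simp only [sqrt_rowEnergy_eq_norm, hsub, WithLp.toLp_sub]
  exact norm_le_norm_add_norm_sub' _ _

lemma sqrt_rowEnergy_le_sigmaMaxU (h : Fin s → Fin K → ℂ) (l : Fin L) :
    √(rowEnergy b h l) ≤ sigmaMaxU b h :=
  le_ciSup (f := fun l => √(rowEnergy b h l)) (Set.finite_range _).bddAbove l

lemma sigmaMaxU_nonneg (h : Fin s → Fin K → ℂ) : 0 ≤ sigmaMaxU b h :=
  Real.iSup_nonneg fun _ => Real.sqrt_nonneg _

lemma sigmaMaxU_le_add (hb : BtBeqI b) (h u : Fin s → Fin K → ℂ) :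
    sigmaMaxU b h ≤ sigmaMaxU b u + stackNorm (fun i => h i - u i) := by
  refine Real.iSup_le (fun l => (sqrt_rowEnergy_le_add b h u l).trans ?_)
    (add_nonneg (sigmaMaxU_nonneg b u) (Real.sqrt_nonneg _))
  gcongr
  · exact sqrt_rowEnergy_le_sigmaMaxU b u l
  · exact sqrt_rowEnergy_le_stackNorm b hb _ l

lemma abs_sigmaMaxU_sub_le (hb : BtBeqI b) (h u : Fin s → Fin K → ℂ) :
    |sigmaMaxU b h - sigmaMaxU b u| ≤ stackNorm (fun i => h i - u i) := by
  rw [abs_sub_le_iff]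
  constructor
  · linarith [sigmaMaxU_le_add b hb h u]
  · linarith [sigmaMaxU_le_add b hb u h, stackNorm_sub_comm h u]

lemma sigmaMaxU_le_stackNorm (hb : BtBeqI b) (h : Fin s → Fin K → ℂ) :
    sigmaMaxU b h ≤ stackNorm h :=
  Real.iSup_le (sqrt_rowEnergy_le_stackNorm b hb h) (Real.sqrt_nonneg _)

lemma rowEnergy_le_sigmaMaxU_sq (h : Fin s → Fin K → ℂ) (l : Fin L) :
    rowEnergy b h l ≤ sigmaMaxU b h ^ 2 := by
  rw [← Real.sq_sqrt (rowEnergy_nonneg b h l)]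
  gcongr
  exact sqrt_rowEnergy_le_sigmaMaxU b h l

lemma stackNorm_sq_div_le_sigmaMaxU_sq (hb : BtBeqI b) (h : Fin s → Fin K → ℂ) :
    stackNorm h ^ 2 / L ≤ sigmaMaxU b h ^ 2 := by
  refine div_le_of_le_mul₀ (Nat.cast_nonneg L) (sq_nonneg _) ?_
  calc stackNorm h ^ 2 = ∑ l, rowEnergy b h l := (sum_rowEnergy b hb h).symm
    _ ≤ ∑ _l : Fin L, sigmaMaxU b h ^ 2 := sum_le_sum fun l _ => rowEnergy_le_sigmaMaxU_sq b h l
    _ = sigmaMaxU b h ^ 2 * L := by simp [mul_comm]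

lemma sigmaMaxU_sq_le {c : ℝ} (hc : 0 ≤ c) (hbl : ∀ l, vnormSq (b l) = c)
    (h : Fin s → Fin K → ℂ) : sigmaMaxU b h ^ 2 ≤ c * stackNorm h ^ 2 := by
  have hsup : sigmaMaxU b h ≤ √(c * stackNorm h ^ 2) :=
    Real.iSup_le (fun l => Real.sqrt_le_sqrt (rowEnergy_le_mul_stackNorm_sq b hbl h l))
      (Real.sqrt_nonneg _)
  calc sigmaMaxU b h ^ 2 ≤ √(c * stackNorm h ^ 2) ^ 2 :=
        pow_le_pow_left₀ (sigmaMaxU_nonneg b h) hsup 2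
    _ = c * stackNorm h ^ 2 := Real.sq_sqrt (by positivity)

end Rows

lemma abs_sq_sub_sq_le_two_mul {a b : ℝ} (ha : 0 ≤ a) (ha1 : a ≤ 1) (hb : 0 ≤ b) (hb1 : b ≤ 1) :
    |a ^ 2 - b ^ 2| ≤ 2 * |a - b| := by
  rw [sq_sub_sq, abs_mul, abs_of_nonneg (add_nonneg ha hb)]
  exact mul_le_mul_of_nonneg_right (by linarith) (abs_nonneg _)

theorem statement16_general
    {K L s : ℕ}
    (b : Fin L → Fin K → ℂ)
    (hbl : ∀ l, vnormSq (b l) = (K : ℝ) / L)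
    (hb : BtBeqI b) :
    (∀ h u : Fin s → Fin K → ℂ,
        |sigmaMaxU b h - sigmaMaxU b u| ≤ stackNorm (fun i => h i - u i))
    ∧ (∀ h u : Fin s → Fin K → ℂ, stackNorm h = 1 → stackNorm u = 1 →
        |sigmaMaxU b h ^ 2 - sigmaMaxU b u ^ 2| ≤ 2 * stackNorm (fun i => h i - u i))
    ∧ (∀ h : Fin s → Fin K → ℂ, stackNorm h = 1 →
        1 / (L : ℝ) ≤ sigmaMaxU b h ^ 2 ∧ sigmaMaxU b h ^ 2 ≤ (K : ℝ) / L) := by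
  refine ⟨abs_sigmaMaxU_sub_le b hb, fun h u hh hu => ?_, fun h hh => ⟨?_, ?_⟩⟩
  · calc |sigmaMaxU b h ^ 2 - sigmaMaxU b u ^ 2| ≤ 2 * |sigmaMaxU b h - sigmaMaxU b u| :=
          abs_sq_sub_sq_le_two_mul (sigmaMaxU_nonneg b h) (hh ▸ sigmaMaxU_le_stackNorm b hb h)
            (sigmaMaxU_nonneg b u) (hu ▸ sigmaMaxU_le_stackNorm b hb u)
      _ ≤ 2 * stackNorm (fun i => h i - u i) := by
          gcongr
          exact abs_sigmaMaxU_sub_le b hb h u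
  · simpa [hh] using stackNorm_sq_div_le_sigmaMaxU_sq b hb h
  · simpa [hh] using sigmaMaxU_sq_le b (by positivity) hbl h

/-- Lipschitz properties and bounds for `σ_max`. -/
theorem statement16
    {K N L s : ℕ} (hK : 0 < K) (hN : 0 < N) (hL : 0 < L) (hs : 0 < s)
    (b : Fin L → Fin K → ℂ)
    (hbl : ∀ l, vnormSq (b l) = (K : ℝ) / L)
    (hKL : (K : ℝ) / L ≤ 1)
    (hb : BtBeqI b)
    (x : Fin s → Fin N → ℂ) (hx : ∀ i, vnorm (x i) = 1) :
    (∀ h u : Fin s → Fin K → ℂ,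
        |sigmaMaxU b h - sigmaMaxU b u| ≤ stackNorm (fun i => h i - u i))
    ∧ (∀ h u : Fin s → Fin K → ℂ, stackNorm h = 1 → stackNorm u = 1 →
        |sigmaMaxU b h ^ 2 - sigmaMaxU b u ^ 2| ≤ 2 * stackNorm (fun i => h i - u i))
    ∧ (∀ h : Fin s → Fin K → ℂ, stackNorm h = 1 →
        1 / (L : ℝ) ≤ sigmaMaxU b h ^ 2 ∧ sigmaMaxU b h ^ 2 ≤ (K : ℝ) / L) :=
  statement16_general b hbl hb

end RGD
end
end
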